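/- arXiv:0907.0986 — 5 statements merged into one kernel-verified Lean document; each statement's English description precedes it below -/
import Mathlib

section
/- Let G be a type and let p be an extended nonnegative real with 1 ≤ p. Define a map Θ on ℓ¹(G; ℓ^p(G)) by letting the s-th component of Θ(u) be (u s s) • δ_s^{(p)}, i.e. the value of the family u(s) ∈ ℓ^p(G) at the point s times the standard basis vector δ_s^{(p)} of ℓ^p(G). Then for every u ∈ ℓ¹(G; ℓ^p(G)) the family Θ(u) again belongs to ℓ¹(G; ℓ^p(G)), the map Θ is linear, and ‖Θ(u)‖ ≤ ‖u‖. -/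
/-!
`Θ` applies, in the `s`-th coordinate, the rank-one projection `x ↦ x s • δ_s` of `ℓ^p(G)`, which
has norm at most `1`. A family of coordinatewise contractions acts on any `lp` space as a
contraction, since the `lp` norm is monotone in the pointwise norms.
-/

open ENNReal

namespace lp

variable {𝕜 α : Type*} {E F : α → Type*} [NormedRing 𝕜]
  [∀ i, NormedAddCommGroup (E i)] [∀ i, Module 𝕜 (E i)] [∀ i, IsBoundedSMul 𝕜 (E i)]
  [∀ i, NormedAddCommGroup (F i)] [∀ i, Module 𝕜 (F i)] [∀ i, IsBoundedSMul 𝕜 (F i)]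

noncomputable def mapₗ (q : ℝ≥0∞) (T : ∀ i, E i →ₗ[𝕜] F i) (hT : ∀ i x, ‖T i x‖ ≤ ‖x‖) :
    lp E q →ₗ[𝕜] lp F q where
  toFun u := ⟨fun i => T i (u i), (lp.memℓp u).mono' fun i => hT i (u i)⟩
  map_add' u v := lp.ext <| funext fun i => map_add (T i) (u i) (v i)
  map_smul' c u := lp.ext <| funext fun i => map_smul (T i) c (u i)

@[simp]
theorem mapₗ_apply (q : ℝ≥0∞) (T : ∀ i, E i →ₗ[𝕜] F i) (hT : ∀ i x, ‖T i x‖ ≤ ‖x‖)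
    (u : lp E q) (i : α) : mapₗ q T hT u i = T i (u i) :=
  rfl

theorem norm_mapₗ_le {q : ℝ≥0∞} (hq : q ≠ 0) (T : ∀ i, E i →ₗ[𝕜] F i)
    (hT : ∀ i x, ‖T i x‖ ≤ ‖x‖) (u : lp E q) : ‖mapₗ q T hT u‖ ≤ ‖u‖ :=
  norm_mono hq fun i => hT i (u i)

variable [DecidableEq α]

noncomputable def singleProjₗ (p : ℝ≥0∞) (i : α) : lp E p →ₗ[𝕜] lp E p :=
  (lsingle p i).comp (evalₗ E p i)

@[simp]
theorem singleProjₗ_apply (p : ℝ≥0∞) (i : α) (x : lp E p) :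
    singleProjₗ (𝕜 := 𝕜) p i x = lp.single p i (x i) :=
  rfl

theorem norm_singleProjₗ_le {p : ℝ≥0∞} (hp : p ≠ 0) (i : α) (x : lp E p) :
    ‖singleProjₗ (𝕜 := 𝕜) p i x‖ ≤ ‖x‖ := by
  rw [singleProjₗ_apply, lp.norm_single (pos_iff_ne_zero.2 hp)]
  exact norm_apply_le_norm hp x i

theorem single_eq_smul_single_one (p : ℝ≥0∞) (i : α) (a : 𝕜) :
    lp.single p i a = a • lp.single (E := fun _ : α => 𝕜) p i 1 := by
  rw [← lp.single_smul, smul_eq_mul, mul_one]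

end lp

theorem theta_linear_contraction_lp
    (G : Type*) (p : ℝ≥0∞) [Fact (1 ≤ p)] [DecidableEq G] :
    (∀ u : lp (fun _ : G => lp (fun _ : G => ℂ) p) 1,
        Memℓp (fun s : G => ((u s s) • lp.single p s (1 : ℂ) : lp (fun _ : G => ℂ) p)) 1) ∧
    ∃ Θ : lp (fun _ : G => lp (fun _ : G => ℂ) p) 1 →ₗ[ℂ]
          lp (fun _ : G => lp (fun _ : G => ℂ) p) 1,
      (∀ (u : lp (fun _ : G => lp (fun _ : G => ℂ) p) 1) (s : G),
          Θ u s = ((u s s) • lp.single p s (1 : ℂ) : lp (fun _ : G => ℂ) p)) ∧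
      ∀ u : lp (fun _ : G => lp (fun _ : G => ℂ) p) 1, ‖Θ u‖ ≤ ‖u‖ := by
  have hp : p ≠ 0 := zero_lt_one.trans_le Fact.out |>.ne'
  set Θ := lp.mapₗ 1 (fun s : G => lp.singleProjₗ (𝕜 := ℂ) (E := fun _ : G => ℂ) p s)
    (fun s => lp.norm_singleProjₗ_le hp s)
  have hΘ : ∀ u s, Θ u s = (u s s) • lp.single p s (1 : ℂ) := by
    intro u s
    rw [lp.mapₗ_apply, lp.singleProjₗ_apply, lp.single_eq_smul_single_one]
  refine ⟨fun u => ?_, Θ, hΘ, lp.norm_mapₗ_le one_ne_zero _ _⟩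
  simpa only [← hΘ] using lp.memℓp (Θ u)
end

section
/- Let G be a group. For a bounded linear operator T on ℓ²(G) and s ∈ G, set δ_s·T := ((T δ_e)(s)) • λ(s), where δ_e = lp.single 2 e 1 is the standard basis vector at the identity e, (T δ_e)(s) denotes the s-th coordinate of the vector T δ_e ∈ ℓ²(G), and λ(s) is the left translation operator. Define a map Θ on ℓ¹(G; B(ℓ²(G))) by Θ(u)(s) = δ_s·(u s). Then for every u ∈ ℓ¹(G; B(ℓ²(G))) the family Θ(u) again belongs to ℓ¹(G; B(ℓ²(G))), the map Θ is linear, and ‖Θ(u)‖ ≤ ‖u‖. -/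
/-! Each `δ_s · _` is a contraction of `B(ℓ²(G))`: the coordinate `(T δ_e)(s)` is bounded by
`‖T δ_e‖ ≤ ‖T‖`, and `λ(s)` is an isometry because left multiplication permutes `G`. An operator
acting coordinatewise by contractions maps `ℓ¹` into itself without increasing the norm. -/

open ENNReal

namespace lp

section MapOfNormLe

variable {𝕜 α : Type*} [NormedField 𝕜] {E F : α → Type*}
  [∀ i, NormedAddCommGroup (E i)] [∀ i, NormedSpace 𝕜 (E i)]
  [∀ i, NormedAddCommGroup (F i)] [∀ i, NormedSpace 𝕜 (F i)] {p : ℝ≥0∞}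

def mapOfNormLe (φ : ∀ i, E i →ₗ[𝕜] F i) (hφ : ∀ i x, ‖φ i x‖ ≤ ‖x‖) :
    lp E p →ₗ[𝕜] lp F p where
  toFun u := ⟨fun i => φ i (u i), (lp.memℓp u).mono' fun i => hφ i (u i)⟩
  map_add' u v := Subtype.ext <| funext fun i => (φ i).map_add (u i) (v i)
  map_smul' c u := Subtype.ext <| funext fun i => (φ i).map_smul c (u i)

theorem norm_mapOfNormLe_le (hp : p ≠ 0) (φ : ∀ i, E i →ₗ[𝕜] F i)
    (hφ : ∀ i x, ‖φ i x‖ ≤ ‖x‖) (u : lp E p) : ‖mapOfNormLe φ hφ u‖ ≤ ‖u‖ :=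
  lp.norm_mono hp fun i => hφ i (u i)

end MapOfNormLe

section Translation

variable {𝕜 α β E : Type*} [NormedAddCommGroup E] {p : ℝ≥0∞}

theorem norm_eq_of_apply_eq_comp_equiv (hp : 0 < p.toReal) (e : β ≃ α)
    {v : lp (fun _ : α => E) p} {w : lp (fun _ : β => E) p} (h : ∀ b, w b = v (e b)) :
    ‖w‖ = ‖v‖ := by
  rw [norm_eq_tsum_rpow hp, norm_eq_tsum_rpow hp, ← e.tsum_eq]
  simp only [h]

theorem opNorm_le_one_of_apply_eq_mul_left [NontriviallyNormedField 𝕜] [NormedSpace 𝕜 E]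
    [Fact (1 ≤ p)] [Group α] (hp : 0 < p.toReal) (s : α)
    (L : lp (fun _ : α => E) p →L[𝕜] lp (fun _ : α => E) p)
    (hL : ∀ u x, L u x = u (s⁻¹ * x)) : ‖L‖ ≤ 1 := by
  refine L.opNorm_le_bound zero_le_one fun u => ?_
  rw [one_mul, norm_eq_of_apply_eq_comp_equiv hp (Equiv.mulLeft s⁻¹) (hL u)]

end Translation

theorem norm_clm_single_apply_le {𝕜 α : Type*} [NontriviallyNormedField 𝕜] [DecidableEq α]
    {E F : α → Type*} [∀ i, NormedAddCommGroup (E i)] [∀ i, NormedSpace 𝕜 (E i)]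
    [∀ i, NormedAddCommGroup (F i)] [∀ i, NormedSpace 𝕜 (F i)] {p q : ℝ≥0∞}
    [Fact (1 ≤ p)] [Fact (1 ≤ q)] (T : lp E p →L[𝕜] lp F q) (i : α) (x : E i) (j : α) :
    ‖T (lp.single p i x) j‖ ≤ ‖T‖ * ‖x‖ :=
  calc ‖T (lp.single p i x) j‖
      ≤ ‖T (lp.single p i x)‖ := lp.norm_apply_le_norm (one_pos.trans_le Fact.out).ne' _ j
    _ ≤ ‖T‖ * ‖lp.single p i x‖ := T.le_opNorm _
    _ = ‖T‖ * ‖x‖ := by rw [lp.norm_single (one_pos.trans_le Fact.out)]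

end lp

section DeltaAction

variable {𝕜 G : Type*} [NontriviallyNormedField 𝕜] [One G] [DecidableEq G] {p : ℝ≥0∞}
  [Fact (1 ≤ p)]

local notation "B" => lp (fun _ : G => 𝕜) p →L[𝕜] lp (fun _ : G => 𝕜) p

/-- The paper's `δ_s · T`. -/
noncomputable def deltaAction (lam : G → B) (s : G) : B →ₗ[𝕜] B where
  toFun T := T (lp.single p 1 1) s • lam s
  map_add' _ _ := add_smul _ _ _
  map_smul' c _ := mul_smul c _ _

theorem norm_deltaAction_le {lam : G → B} {s : G} (hlam : ‖lam s‖ ≤ 1) (T : B) :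
    ‖deltaAction lam s T‖ ≤ ‖T‖ :=
  calc ‖deltaAction lam s T‖ ≤ ‖T (lp.single p 1 1) s‖ * ‖lam s‖ :=
        norm_smul_le (T (lp.single p 1 1) s) (lam s)
    _ ≤ ‖T‖ * ‖(1 : 𝕜)‖ * 1 := by
        gcongr
        exact lp.norm_clm_single_apply_le T 1 1 s
    _ = ‖T‖ := by rw [norm_one, mul_one, mul_one]

end DeltaAction

theorem theta_linear_contraction_operator_valued
    (G : Type*) [Group G] [DecidableEq G]
    (lam : G → (lp (fun _ : G => ℂ) 2 →L[ℂ] lp (fun _ : G => ℂ) 2))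
    (hlam : ∀ (s : G) (u : lp (fun _ : G => ℂ) 2) (x : G), lam s u x = u (s⁻¹ * x)) :
    (∀ u : lp (fun _ : G => lp (fun _ : G => ℂ) 2 →L[ℂ] lp (fun _ : G => ℂ) 2) 1,
        Memℓp (fun s : G => ((u s (lp.single 2 (1 : G) (1 : ℂ))) s) • lam s) 1) ∧
    ∃ Θ : lp (fun _ : G => lp (fun _ : G => ℂ) 2 →L[ℂ] lp (fun _ : G => ℂ) 2) 1 →ₗ[ℂ]
          lp (fun _ : G => lp (fun _ : G => ℂ) 2 →L[ℂ] lp (fun _ : G => ℂ) 2) 1,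
      (∀ (u : lp (fun _ : G => lp (fun _ : G => ℂ) 2 →L[ℂ] lp (fun _ : G => ℂ) 2) 1) (s : G),
          Θ u s = ((u s (lp.single 2 (1 : G) (1 : ℂ))) s) • lam s) ∧
      ∀ u : lp (fun _ : G => lp (fun _ : G => ℂ) 2 →L[ℂ] lp (fun _ : G => ℂ) 2) 1,
        ‖Θ u‖ ≤ ‖u‖ := by
  have hcontr : ∀ s T, ‖deltaAction lam s T‖ ≤ ‖T‖ := fun s =>
    norm_deltaAction_le (lp.opNorm_le_one_of_apply_eq_mul_left (by norm_num) s _ (hlam s))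
  exact ⟨fun u => (lp.memℓp u).mono' fun s => hcontr s (u s),
    lp.mapOfNormLe (deltaAction lam) hcontr, fun _ _ => rfl,
    lp.norm_mapOfNormLe_le one_ne_zero _ hcontr⟩
end

section
/- Let G be a type and let p be an extended nonnegative real with 1 ≤ p. The diagonal evaluation map π : ℓ¹(G; ℓ^p(G)) → ℓ^p(G) defined by π(u)(t) = u t t (the value at t of the family u(t) ∈ ℓ^p(G)) is well defined (π(u) belongs to ℓ^p(G) for every u ∈ ℓ¹(G; ℓ^p(G))), linear, and satisfies ‖π(u)‖_p ≤ ‖u‖. -/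
/-!
Since `‖u t t‖ ≤ ‖u t‖_p`, the diagonal of `u` is dominated coordinatewise by the summable
sequence `t ↦ ‖u t‖_p`. For `1 ≤ p` the `ℓ^p` norm is at most the `ℓ¹` norm, because
`∑ aᵢ ^ p ≤ (∑ aᵢ) ^ p` for nonnegative `aᵢ`.
-/

open ENNReal

theorem Real.sum_rpow_le_rpow_sum {ι : Type*} (s : Finset ι) {f : ι → ℝ}
    (hf : ∀ i ∈ s, 0 ≤ f i) {q : ℝ} (hq : 1 ≤ q) :
    ∑ i ∈ s, f i ^ q ≤ (∑ i ∈ s, f i) ^ q := by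
  induction s using Finset.cons_induction with
  | empty => simp [Real.zero_rpow (by linarith : q ≠ 0)]
  | cons a s ha ih =>
    simp only [Finset.mem_cons, forall_eq_or_imp] at hf
    rw [Finset.sum_cons, Finset.sum_cons]
    calc f a ^ q + ∑ i ∈ s, f i ^ q ≤ f a ^ q + (∑ i ∈ s, f i) ^ q := by
          gcongr; exact ih hf.2
      _ ≤ (f a + ∑ i ∈ s, f i) ^ q :=
          Real.add_rpow_le_rpow_add hf.1 (Finset.sum_nonneg hf.2) hq

namespace lp

variable {α 𝕜 : Type*} {E F : α → Type*} [∀ i, NormedAddCommGroup (E i)]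
  [∀ i, NormedAddCommGroup (F i)] {p : ℝ≥0∞}

theorem sum_norm_le_norm_of_one (y : lp F 1) (s : Finset α) : ∑ i ∈ s, ‖y i‖ ≤ ‖y‖ := by
  simpa using sum_rpow_le_norm_rpow (by simp) y s

theorem norm_le_norm_one_of_forall_le [Fact (1 ≤ p)] {x : lp E p} {y : lp F 1}
    (h : ∀ i, ‖x i‖ ≤ ‖y i‖) : ‖x‖ ≤ ‖y‖ := by
  obtain rfl | hp := eq_or_ne p ∞
  · exact norm_le_of_forall_le (norm_nonneg y) fun i ↦
      (h i).trans (norm_apply_le_norm one_ne_zero y i)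
  have hp1 : 1 ≤ p.toReal := by simpa using ENNReal.toReal_mono hp (Fact.out : 1 ≤ p)
  refine norm_le_of_forall_sum_le (by linarith) (norm_nonneg y) fun s ↦ ?_
  calc ∑ i ∈ s, ‖x i‖ ^ p.toReal ≤ ∑ i ∈ s, ‖y i‖ ^ p.toReal := by
        gcongr with i; exact h i
    _ ≤ (∑ i ∈ s, ‖y i‖) ^ p.toReal :=
        Real.sum_rpow_le_rpow_sum s (fun i _ ↦ norm_nonneg _) hp1
    _ ≤ ‖y‖ ^ p.toReal := by
        gcongr; exact sum_norm_le_norm_of_one y s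

variable [Fact (1 ≤ p)] [NormedRing 𝕜] [∀ i, Module 𝕜 (E i)]
  [∀ i, IsBoundedSMul 𝕜 (E i)]

theorem memℓp_diagonal (u : lp (fun _ : α ↦ lp E p) 1) : Memℓp (fun i ↦ u i i) p :=
  ((lp.memℓp u).mono' fun i ↦
      norm_apply_le_norm (zero_lt_one.trans_le Fact.out).ne' (u i) i).of_exponent_ge Fact.out

variable (𝕜 E p) in
def diagonal : lp (fun _ : α ↦ lp E p) 1 →ₗ[𝕜] lp E p where
  toFun u := ⟨fun i ↦ u i i, memℓp_diagonal u⟩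
  map_add' _ _ := rfl
  map_smul' _ _ := rfl

theorem norm_diagonal_le (u : lp (fun _ : α ↦ lp E p) 1) : ‖diagonal 𝕜 E p u‖ ≤ ‖u‖ :=
  norm_le_norm_one_of_forall_le fun i ↦
    norm_apply_le_norm (zero_lt_one.trans_le Fact.out).ne' (u i) i

end lp

theorem diagonal_evaluation_linear_contraction
    (G : Type*) (p : ℝ≥0∞) [Fact (1 ≤ p)] :
    (∀ u : lp (fun _ : G => lp (fun _ : G => ℂ) p) 1,
        Memℓp (fun t : G => u t t) p) ∧
    ∃ π : lp (fun _ : G => lp (fun _ : G => ℂ) p) 1 →ₗ[ℂ] lp (fun _ : G => ℂ) p,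
      (∀ (u : lp (fun _ : G => lp (fun _ : G => ℂ) p) 1) (t : G), π u t = u t t) ∧
      ∀ u : lp (fun _ : G => lp (fun _ : G => ℂ) p) 1, ‖π u‖ ≤ ‖u‖ :=
  ⟨lp.memℓp_diagonal, lp.diagonal ℂ _ p, fun _ _ ↦ rfl, lp.norm_diagonal_le⟩
end

section
/- Let G be a type and let p be an extended nonnegative real with 1 < p < ∞. For a finitely supported g : G →₀ ℂ and x ∈ ℓ^p(G), let g·x ∈ ℓ^p(G) be the pointwise product, (g·x)(t) = g t * x t; for u ∈ ℓ¹(G; ℓ^p(G)) let g·u ∈ ℓ¹(G; ℓ^p(G)) be given by (g·u)(t) = (g t) • (u t). Then the following are equivalent: (a) there exists a bounded linear map ρ : ℓ^p(G) → ℓ¹(G; ℓ^p(G)) such that (i) (ρ x) t t = x t for every x ∈ ℓ^p(G) and t ∈ G, and (ii) ρ(g·x) = g·ρ(x) for every finitely supported g : G →₀ ℂ and every x ∈ ℓ^p(G); (b) G is finite. -/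
/-!
If `ρ` is a bounded right inverse of the multiplication map, then for every finite `F ⊆ G` the
indicator `1_F` satisfies `#F = ∑_{t ∈ F} ‖ρ(1_F) t t‖ ≤ ‖ρ(1_F)‖₁ ≤ ‖ρ‖ · #F ^ (1/p)`, so
`#F ^ (1 - 1/p) ≤ ‖ρ‖`; as `p > 1`, finite subsets of `G` have bounded size. Conversely, for finite
`G` the map `x ↦ (s ↦ x s • δ_s)` is a module map splitting the multiplication.
-/

open ENNReal Finset Filter

theorem finite_of_forall_card_le_mul_rpow {G : Type*} {a : ℝ} (ha : a < 1) (C : ℝ)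
    (h : ∀ F : Finset G, (#F : ℝ) ≤ C * (#F : ℝ) ^ a) : Finite G := by
  by_contra hG
  have : Infinite G := not_finite_iff_infinite.mp hG
  obtain ⟨n, hC, hn⟩ : ∃ n : ℕ, C < (n : ℝ) ^ (1 - a) ∧ 1 ≤ n :=
    ((((tendsto_rpow_atTop (sub_pos.2 ha)).comp tendsto_natCast_atTop_atTop).eventually_gt_atTop
      C).and (eventually_ge_atTop 1)).exists
  obtain ⟨F, rfl⟩ := Infinite.exists_subset_card_eq G n
  have hF : (0 : ℝ) < #F := by exact_mod_cast hn
  have : (#F : ℝ) < #F := calc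
    (#F : ℝ) ≤ C * (#F : ℝ) ^ a := h F
    _ < (#F : ℝ) ^ (1 - a) * (#F : ℝ) ^ a := by gcongr
    _ = #F := by rw [← Real.rpow_add hF, sub_add_cancel, Real.rpow_one]
  exact this.false

theorem ENNReal.toReal_inv_lt_one {p : ℝ≥0∞} (hp : 1 < p) : p.toReal⁻¹ < 1 := by
  rw [← toReal_inv]
  exact toReal_lt_of_lt_ofReal (by simpa using ENNReal.inv_lt_one.2 hp)

section Diagonal

variable {ι 𝕜 : Type*} {E : ι → Type*} [∀ i, NormedAddCommGroup (E i)]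

theorem sum_norm_diag_le_norm {r : ℝ≥0∞} [Fact (1 ≤ r)] (u : lp (fun _ : ι => lp E r) 1)
    (F : Finset ι) : ∑ t ∈ F, ‖u t t‖ ≤ ‖u‖ := by
  calc ∑ t ∈ F, ‖u t t‖ ≤ ∑ t ∈ F, ‖u t‖ :=
        sum_le_sum fun t _ => lp.norm_apply_le_norm (zero_lt_one.trans_le Fact.out).ne' (u t) t
    _ ≤ ‖u‖ := by
        simpa using lp.sum_rpow_le_norm_rpow (p := 1) (by simp) u F

variable [NormedField 𝕜] [∀ i, NormedSpace 𝕜 (E i)] [Fintype ι] [DecidableEq ι]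
  (p : ℝ≥0∞) [Fact (1 ≤ p)]

variable (𝕜 E) in
noncomputable def lpDiagCLM : lp E p →L[𝕜] lp (fun _ : ι => lp E p) 1 :=
  ∑ s, (lp.singleContinuousLinearMap 𝕜 (fun _ => lp E p) 1 s).comp
    ((lp.singleContinuousLinearMap 𝕜 E p s).comp (lp.evalCLM 𝕜 E p s))

theorem lpDiagCLM_apply (x : lp E p) (s : ι) : lpDiagCLM 𝕜 E p x s = lp.single p s (x s) := by
  rw [lpDiagCLM, _root_.sum_apply, lp.coeFn_sum, Finset.sum_apply]
  simp only [ContinuousLinearMap.comp_apply, lp.singleContinuousLinearMap_apply, lp.single_apply,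
    Pi.single_apply, sum_ite_eq, mem_univ, if_true]
  rfl

end Diagonal

section Indicator

variable {ι 𝕜 : Type*} [NormedField 𝕜] [DecidableEq ι] (p : ℝ≥0∞)

theorem sum_single_one_apply (F : Finset ι) (t : ι) :
    (∑ s ∈ F, lp.single p s (1 : 𝕜)) t = if t ∈ F then 1 else 0 := by
  rw [lp.coeFn_sum, Finset.sum_apply]
  simp [lp.single_apply, Pi.single_apply]

/-- For `p = ∞` the exponent is `0⁻¹ = 0`, which is the right value there as well. -/
theorem norm_sum_single_one_le [Fact (1 ≤ p)] (F : Finset ι) :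
    ‖∑ s ∈ F, lp.single p s (1 : 𝕜)‖ ≤ (#F : ℝ) ^ p.toReal⁻¹ := by
  rcases eq_or_ne p ∞ with rfl | hp
  · refine lp.norm_le_of_forall_le (by simp) fun t => ?_
    rw [sum_single_one_apply]
    split_ifs <;> simp
  · have hq : 0 < p.toReal := toReal_pos (zero_lt_one.trans_le Fact.out).ne' hp
    rw [← Real.rpow_rpow_inv (norm_nonneg _) hq.ne', lp.norm_sum_single hq]
    simp

end Indicator

theorem card_le_opNorm_mul_card_rpow {ι 𝕜 : Type*} [NontriviallyNormedField 𝕜] [DecidableEq ι]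
    (p : ℝ≥0∞) [Fact (1 ≤ p)] {r : ℝ≥0∞} [Fact (1 ≤ r)]
    (ρ : lp (fun _ : ι => 𝕜) p →L[𝕜] lp (fun _ : ι => lp (fun _ : ι => 𝕜) r) 1)
    (hρ : ∀ x t, ρ x t t = x t) (F : Finset ι) : (#F : ℝ) ≤ ‖ρ‖ * (#F : ℝ) ^ p.toReal⁻¹ := by
  set x := ∑ s ∈ F, lp.single p s (1 : 𝕜)
  calc (#F : ℝ) = ∑ t ∈ F, ‖ρ x t t‖ := by
        rw [card_eq_sum_ones, Nat.cast_sum]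
        refine sum_congr rfl fun t ht => ?_
        rw [hρ, sum_single_one_apply, if_pos ht, norm_one, Nat.cast_one]
    _ ≤ ‖ρ x‖ := sum_norm_diag_le_norm (ρ x) F
    _ ≤ ‖ρ‖ * ‖x‖ := ρ.le_opNorm x
    _ ≤ ‖ρ‖ * (#F : ℝ) ^ p.toReal⁻¹ := by gcongr; exact norm_sum_single_one_le p F

theorem lp_projective_iff_finite_general
    (G : Type*) (p : ℝ≥0∞) [Fact (1 ≤ p)] (hp₁ : 1 < p) :
    (∃ ρ : lp (fun _ : G => ℂ) p →L[ℂ] lp (fun _ : G => lp (fun _ : G => ℂ) p) 1,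
        (∀ (x : lp (fun _ : G => ℂ) p) (t : G), ρ x t t = x t) ∧
        (∀ (g : G →₀ ℂ) (x x' : lp (fun _ : G => ℂ) p),
          (∀ t : G, x' t = g t * x t) →
            ∀ s : G, ρ x' s = g s • ρ x s)) ↔ Finite G := by
  classical
  constructor
  · rintro ⟨ρ, hρ, -⟩
    exact finite_of_forall_card_le_mul_rpow (toReal_inv_lt_one hp₁) ‖ρ‖
      (card_le_opNorm_mul_card_rpow p ρ hρ)
  · intro
    have := Fintype.ofFinite G
    refine ⟨lpDiagCLM ℂ _ p, fun x t => ?_, fun g x x' hx s => ?_⟩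
    · rw [lpDiagCLM_apply, lp.single_apply_self]
    · rw [lpDiagCLM_apply, lpDiagCLM_apply, hx, ← smul_eq_mul, lp.single_smul]

theorem lp_projective_iff_finite
    (G : Type*) (p : ℝ≥0∞) [Fact (1 ≤ p)] (hp₁ : 1 < p) (hp₂ : p < ∞) :
    (∃ ρ : lp (fun _ : G => ℂ) p →L[ℂ] lp (fun _ : G => lp (fun _ : G => ℂ) p) 1,
        (∀ (x : lp (fun _ : G => ℂ) p) (t : G), ρ x t t = x t) ∧
        (∀ (g : G →₀ ℂ) (x x' : lp (fun _ : G => ℂ) p),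
          (∀ t : G, x' t = g t * x t) →
            ∀ s : G, ρ x' s = g s • ρ x s)) ↔ Finite G :=
  lp_projective_iff_finite_general G p hp₁
end

section
/- Let G be a type. For a finitely supported g : G →₀ ℂ and x ∈ ℓ^∞(G), let g·x ∈ ℓ^∞(G) be the pointwise product, (g·x)(t) = g t * x t. Then the following are equivalent: (a) there exist bounded linear maps ρ₁ : ℓ^∞(G) → ℓ¹(G; ℓ^∞(G)) and ρ₂ : ℓ^∞(G) → ℓ^∞(G) such that (i) (ρ₁ x) t t + (ρ₂ x) t = x t for every x ∈ ℓ^∞(G) and t ∈ G, and (ii) for every finitely supported g : G →₀ ℂ and every x ∈ ℓ^∞(G), ρ₂(g·x) = 0 and (ρ₁(g·x))(s) = (g s) • ((ρ₁ x) s) + (g s) • (ρ₂ x) for every s ∈ G; (b) G is finite. -/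
/-!
If `(ρ₁, ρ₂)` satisfies (i) and (ii), apply (ii) with `x = 1` and `x' = g`: together with (i) it
forces the diagonal of `ρ₁ g` to be `g` itself, so `∑ s ∈ A, ‖g s‖ ≤ ‖ρ₁ g‖ ≤ ‖ρ₁‖ ‖g‖_∞` for
every finite `A`. Taking for `g` the indicator of `A` bounds `#A` by `‖ρ₁‖`, so `G` is finite.
Conversely, for finite `G` the diagonal map `x ↦ (s ↦ x s • δ_s)` together with `ρ₂ = 0` satisfies
(i) and (ii); it is bounded because it is a finite sum of bounded maps.
-/

open ENNReal Finset

set_option synthInstance.maxHeartbeats 400000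

def Finsupp.toLp {ι E : Type*} [NormedAddCommGroup E] (p : ℝ≥0∞) (g : ι →₀ E) :
    lp (fun _ : ι => E) p :=
  ⟨⇑g, (memℓp_zero g.hasFiniteSupport).of_exponent_ge zero_le⟩

@[simp]
theorem Finsupp.coe_toLp {ι E : Type*} [NormedAddCommGroup E] (p : ℝ≥0∞) (g : ι →₀ E) :
    ⇑(g.toLp p) = g :=
  rfl

section Splitting

variable {𝕜 G : Type*} [NontriviallyNormedField 𝕜]

/-- `(ρ₁, ρ₂) : ℓ^∞(G) → ℓ¹(G; ℓ^∞(G)) ⊕ ℓ^∞(G)` is a module right inverse of the extended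
multiplication map `(u, y) ↦ (t ↦ u t t + y t)`. -/
structure IsMultiplicationSection
    (ρ₁ : lp (fun _ : G => 𝕜) ∞ →L[𝕜] lp (fun _ : G => lp (fun _ : G => 𝕜) ∞) 1)
    (ρ₂ : lp (fun _ : G => 𝕜) ∞ →L[𝕜] lp (fun _ : G => 𝕜) ∞) : Prop where
  diag_add : ∀ (x : lp (fun _ : G => 𝕜) ∞) (t : G), ρ₁ x t t + ρ₂ x t = x t
  map_mul : ∀ (g : G →₀ 𝕜) (x x' : lp (fun _ : G => 𝕜) ∞),
    (∀ t : G, x' t = g t * x t) →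
      ρ₂ x' = 0 ∧ ∀ s : G, ρ₁ x' s = g s • (ρ₁ x s) + g s • (ρ₂ x)

namespace IsMultiplicationSection

variable {ρ₁ : lp (fun _ : G => 𝕜) ∞ →L[𝕜] lp (fun _ : G => lp (fun _ : G => 𝕜) ∞) 1}
  {ρ₂ : lp (fun _ : G => 𝕜) ∞ →L[𝕜] lp (fun _ : G => 𝕜) ∞}
  (h : IsMultiplicationSection ρ₁ ρ₂)
include h

theorem apply_toLp_apply_self (g : G →₀ 𝕜) (s : G) : ρ₁ (g.toLp ∞) s s = g s := by
  have hs := (h.map_mul g 1 (g.toLp ∞) (by simp)).2 s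
  rw [hs, ← smul_add, lp.coeFn_smul, Pi.smul_apply, lp.coeFn_add, Pi.add_apply, h.diag_add]
  simp

theorem sum_norm_le (g : G →₀ 𝕜) (A : Finset G) :
    ∑ s ∈ A, ‖g s‖ ≤ ‖ρ₁‖ * ‖g.toLp ∞‖ := by
  have hsum := lp.sum_rpow_le_norm_rpow (by simp) (ρ₁ (g.toLp ∞)) A
  simp only [toReal_one, Real.rpow_one] at hsum
  calc ∑ s ∈ A, ‖g s‖ = ∑ s ∈ A, ‖ρ₁ (g.toLp ∞) s s‖ := by
        simp only [h.apply_toLp_apply_self]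
    _ ≤ ∑ s ∈ A, ‖ρ₁ (g.toLp ∞) s‖ :=
        sum_le_sum fun s _ => lp.norm_apply_le_norm top_ne_zero _ s
    _ ≤ ‖ρ₁ (g.toLp ∞)‖ := hsum
    _ ≤ ‖ρ₁‖ * ‖g.toLp ∞‖ := ρ₁.le_opNorm _

theorem card_le_opNorm (A : Finset G) : (#A : ℝ) ≤ ‖ρ₁‖ := by
  classical
  set g : G →₀ 𝕜 := Finsupp.indicator A fun _ _ => 1
  have hg : ‖g.toLp ∞‖ ≤ 1 :=
    lp.norm_le_of_forall_le zero_le_one fun t => by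
      by_cases ht : t ∈ A <;> simp [g, Finsupp.indicator_apply, ht]
  calc (#A : ℝ) = ∑ s ∈ A, ‖g s‖ := by
        simp +contextual [g]
    _ ≤ ‖ρ₁‖ * ‖g.toLp ∞‖ := h.sum_norm_le g A
    _ ≤ ‖ρ₁‖ := mul_le_of_le_one_right (norm_nonneg _) hg

theorem finite : Finite G :=
  have := fintypeOfFinsetCardLe ⌈‖ρ₁‖⌉₊ fun A => by
    exact_mod_cast (h.card_le_opNorm A).trans (Nat.le_ceil _)
  inferInstance

end IsMultiplicationSection

end Splitting

section Diagonal

variable (𝕜 : Type*) {G E : Type*} [NontriviallyNormedField 𝕜] [NormedAddCommGroup E]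
  [NormedSpace 𝕜 E] [Fintype G] [DecidableEq G]

noncomputable def linftyDiagonal :
    lp (fun _ : G => E) ∞ →L[𝕜] lp (fun _ : G => lp (fun _ : G => E) ∞) 1 :=
  ∑ s, (lp.singleContinuousLinearMap 𝕜 _ 1 s).comp
    ((lp.singleContinuousLinearMap 𝕜 _ ∞ s).comp (lp.evalCLM 𝕜 _ ∞ s))

theorem linftyDiagonal_apply (x : lp (fun _ : G => E) ∞) (s : G) :
    linftyDiagonal 𝕜 x s = lp.single ∞ s (x s) := by
  simp only [linftyDiagonal, _root_.sum_apply, lp.coeFn_sum, Finset.sum_apply,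
    ContinuousLinearMap.comp_apply, lp.singleContinuousLinearMap_apply]
  simp [lp.evalCLM, Pi.single_apply]

theorem isMultiplicationSection_linftyDiagonal :
    IsMultiplicationSection (linftyDiagonal 𝕜 (G := G)) 0 where
  diag_add x t := by simp [linftyDiagonal_apply]
  map_mul g x x' hx' :=
    ⟨rfl, fun s => by simp [linftyDiagonal_apply, hx', ← smul_eq_mul, lp.single_smul]⟩

end Diagonal

theorem linfty_projective_iff_finite (G : Type*) :
    (∃ (ρ₁ : lp (fun _ : G => ℂ) ∞ →L[ℂ] lp (fun _ : G => lp (fun _ : G => ℂ) ∞) 1)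
       (ρ₂ : lp (fun _ : G => ℂ) ∞ →L[ℂ] lp (fun _ : G => ℂ) ∞),
        (∀ (x : lp (fun _ : G => ℂ) ∞) (t : G), ρ₁ x t t + ρ₂ x t = x t) ∧
        (∀ (g : G →₀ ℂ) (x x' : lp (fun _ : G => ℂ) ∞),
          (∀ t : G, x' t = g t * x t) →
            ρ₂ x' = 0 ∧ ∀ s : G, ρ₁ x' s = g s • (ρ₁ x s) + g s • (ρ₂ x))) ↔
      Finite G := by
  classical
  refine ⟨fun ⟨ρ₁, ρ₂, h₁, h₂⟩ => (IsMultiplicationSection.mk h₁ h₂).finite, fun _ => ?_⟩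
  have := Fintype.ofFinite G
  obtain ⟨h₁, h₂⟩ := isMultiplicationSection_linftyDiagonal ℂ (G := G)
  exact ⟨_, _, h₁, h₂⟩
end
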